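/- Let H be a finite-dimensional complex Hilbert space and let k be an integer with 4 ≤ 2k ≤ dim H and k = dim H − 3. If X, Y are non-compatible adjacent k-dimensional subspaces of H, then there are infinitely many k-dimensional subspaces Z of H ortho-adjacent to both X and Y and such that there is precisely one k-dimensional subspace Z' of H ortho-adjacent to each of X, Y and Z. -/

import Mathlib

/-!
Put `M = X ⊓ Y` and `N = X ⊔ Y`, so that `dim M = k - 1`, `dim N = k + 1` and `dim Nᗮ = 2`.
For every line `L ≤ Nᗮ` the subspace `M ⊔ L` is ortho-adjacent to `X` and `Y` (the product
`P_X P_(M ⊔ L) = P_M` is self-adjoint, so the two projections commute), and distinct lines give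
distinct subspaces; `Nᗮ` contains infinitely many lines.

The partner of `Z = M ⊔ L` is `M ⊔ L'`, where `L' = Lᗮ ⊓ Nᗮ`. A common neighbour `W` of `X` and
`Y` contains `M` or lies in `N`, and in the second case `W ⊓ Z ≤ N ⊓ Z = M` forces `M ≤ W` as
well. Hence `W = M ⊔ (Mᗮ ⊓ W)`, and since `W ⊓ T = M` for `T = X, Y, Z`, compatibility of the
projections makes the line `Mᗮ ⊓ W` orthogonal to `X`, `Y` and `Z`, that is, equal to `L'`.
-/

noncomputable section

open scoped Classical

variable {H : Type*} [NormedAddCommGroup H] [InnerProductSpace ℂ H] [CompleteSpace H]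

/-- The orthogonal projection onto `X`, as an operator `H → H` (junk value `0` if the
orthogonal projection onto `X` does not exist; it always exists for finite-dimensional,
and more generally complete, subspaces). -/
noncomputable def projOn (X : Submodule ℂ H) : H →L[ℂ] H :=
  if h : X.HasOrthogonalProjection then
    haveI := h
    X.subtypeL.comp X.orthogonalProjectionOnto
  else 0

/-- Two subspaces of `H` are compatible if their orthogonal projections commute. -/
def Compatible (X Y : Submodule ℂ H) : Prop :=
  projOn X * projOn Y = projOn Y * projOn X

/-- `X` is a `k`-dimensional subspace of `H`. -/
def IsDim (k : ℕ) (X : Submodule ℂ H) : Prop :=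
  FiniteDimensional ℂ X ∧ Module.finrank ℂ X = k

/-- Two (distinct) `k`-dimensional subspaces are adjacent if their intersection is
`(k-1)`-dimensional. -/
def AdjacentSub (k : ℕ) (X Y : Submodule ℂ H) : Prop :=
  X ≠ Y ∧ Module.finrank ℂ ↥(X ⊓ Y) = k - 1

/-- Ortho-adjacency: adjacent and compatible. -/
def OrthoAdjacent (k : ℕ) (X Y : Submodule ℂ H) : Prop :=
  AdjacentSub k X Y ∧ Compatible X Y

/-- The ortho-Grassmann graph `Γ⊥_k(H)` on the `k`-dimensional subspaces of `H`:
two `k`-dimensional subspaces are connected by an edge if they are ortho-adjacent. -/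
def orthoGrassmannGraph (H : Type*) [NormedAddCommGroup H] [InnerProductSpace ℂ H]
    [CompleteSpace H] (k : ℕ) : SimpleGraph {X : Submodule ℂ H // IsDim k X} where
  Adj X Y := OrthoAdjacent k X.1 Y.1
  symm := ⟨by
    rintro X Y ⟨⟨hne, hdim⟩, hc⟩
    refine ⟨⟨hne.symm, by rwa [inf_comm]⟩, ?_⟩
    unfold Compatible at hc ⊢
    exact hc.symm⟩
  loopless := ⟨fun X h => h.1.1 rfl⟩

/-- The Grassmann graph `Γ_k(H)` on the `k`-dimensional subspaces of `H`:
two `k`-dimensional subspaces are connected by an edge if they are adjacent. -/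
def grassmannGraph (H : Type*) [NormedAddCommGroup H] [InnerProductSpace ℂ H]
    [CompleteSpace H] (k : ℕ) : SimpleGraph {X : Submodule ℂ H // IsDim k X} where
  Adj X Y := AdjacentSub k X.1 Y.1
  symm := ⟨by
    rintro X Y ⟨hne, hdim⟩
    exact ⟨hne.symm, by rwa [inf_comm]⟩⟩
  loopless := ⟨fun X h => h.1 rfl⟩

open Module Submodule

section Orthogonal

variable {𝕜 E : Type*} [RCLike 𝕜] [NormedAddCommGroup E] [InnerProductSpace 𝕜 E]
  {A C L M N T X Z : Submodule 𝕜 E}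

lemma starProjection_comp_starProjection_sup_of_le_orthogonal [A.HasOrthogonalProjection]
    [T.HasOrthogonalProjection] [(A ⊔ C).HasOrthogonalProjection] (hAT : A ≤ T)
    (hCT : C ≤ Tᗮ) :
    T.starProjection ∘L (A ⊔ C).starProjection = A.starProjection := by
  ext v
  obtain ⟨a, ha, c, hc, hac⟩ := mem_sup.mp ((A ⊔ C).starProjection_apply_mem v)
  have hcA : c ∈ Aᗮ := orthogonal_le hAT (hCT hc)
  calc T.starProjection ((A ⊔ C).starProjection v)
      = T.starProjection a + T.starProjection c := by rw [← hac, map_add]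
    _ = a := by
      rw [starProjection_eq_self_iff.mpr (hAT ha),
        (starProjection_apply_eq_zero_iff T).mpr (hCT hc), add_zero]
    _ = A.starProjection a + A.starProjection c := by
      rw [starProjection_eq_self_iff.mpr ha, (starProjection_apply_eq_zero_iff A).mpr hcA,
        add_zero]
    _ = A.starProjection v := by
      rw [← map_add, hac, ← ContinuousLinearMap.comp_apply,
        starProjection_comp_starProjection_of_le le_sup_left]

lemma commute_starProjection_sup_of_le_orthogonal [CompleteSpace E] [A.HasOrthogonalProjection]
    [T.HasOrthogonalProjection] [(A ⊔ C).HasOrthogonalProjection] (hAT : A ≤ T)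
    (hCT : C ≤ Tᗮ) : Commute (A ⊔ C).starProjection T.starProjection :=
  (IsSelfAdjoint.commute_of_mul_eq_isSelfAdjoint _ _ _ (isSelfAdjoint_starProjection T)
    (isSelfAdjoint_starProjection _) (isSelfAdjoint_starProjection A)
    (starProjection_comp_starProjection_sup_of_le_orthogonal hAT hCT)).symm

lemma inf_orthogonal_inf_le_orthogonal_of_commute [X.HasOrthogonalProjection]
    [Z.HasOrthogonalProjection] (h : Commute X.starProjection Z.starProjection) :
    (X ⊓ Z)ᗮ ⊓ X ≤ Zᗮ := by
  rintro w ⟨hw, hwX⟩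
  set q := Z.starProjection w
  have hqZ : q ∈ Z := Z.starProjection_apply_mem w
  have hqX : q ∈ X := by
    have hcomm : X.starProjection q = Z.starProjection (X.starProjection w) :=
      DFunLike.congr_fun h.eq w
    rwa [starProjection_eq_self_iff.mpr hwX, starProjection_eq_self_iff] at hcomm
  have hwq : inner 𝕜 w q = 0 := (mem_orthogonal' _ _).mp hw q ⟨hqX, hqZ⟩
  have hqq : inner 𝕜 q q = 0 := by
    rw [inner_starProjection_left_eq_right, starProjection_eq_self_iff.mpr hqZ, hwq]
  exact (starProjection_apply_eq_zero_iff Z).mp (inner_self_eq_zero.mp hqq)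

lemma sup_inf_eq_of_le_orthogonal (hMT : M ≤ T) (hLT : L ≤ Tᗮ) : (M ⊔ L) ⊓ T = M := by
  rw [sup_inf_assoc_of_le L hMT,
    disjoint_iff.mp ((orthogonal_disjoint T).symm.mono_left hLT), sup_bot_eq]

lemma injOn_sup_left_of_le (hMN : M ≤ N) : Set.InjOn (M ⊔ ·) {L | L ≤ Nᗮ} := by
  have hinf : ∀ L ≤ Nᗮ, (M ⊔ L) ⊓ Nᗮ = L := fun L hL => by
    rw [sup_comm]
    exact sup_inf_eq_of_le_orthogonal hL (hMN.trans N.le_orthogonal_orthogonal)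
  intro L hL L' hL' h
  exact (hinf L hL).symm.trans ((congrArg (· ⊓ Nᗮ) h).trans (hinf L' hL'))

lemma finrank_sup_of_le_orthogonal [FiniteDimensional 𝕜 E] (hLM : L ≤ Mᗮ) :
    finrank 𝕜 ↥(M ⊔ L) = finrank 𝕜 M + finrank 𝕜 L := by
  have h := finrank_sup_add_finrank_inf_eq M L
  rwa [disjoint_iff.mp ((orthogonal_disjoint M).mono_right hLM), finrank_bot, add_zero] at h

end Orthogonal

lemma setOf_le_finrank_eq_one_infinite {K V : Type*} [Field K] [Infinite K] [AddCommGroup V]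
    [Module K V] {P : Submodule K V} (hP : 1 < finrank K P) :
    {L : Submodule K V | L ≤ P ∧ finrank K L = 1}.Infinite := by
  have : Nontrivial P := Module.nontrivial_of_finrank_pos (R := K) (by omega)
  obtain ⟨x, hx⟩ := exists_ne (0 : P)
  obtain ⟨y, hxy⟩ := exists_linearIndependent_pair_of_one_lt_finrank hP hx
  have hne : ∀ c : K, x + c • y ≠ 0 := fun c h =>
    one_ne_zero (LinearIndependent.pair_iff.mp hxy 1 c (by rw [one_smul, h])).1
  have hinj : Function.Injective fun c : K => K ∙ ((x + c • y : P) : V) := by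
    intro c c' h
    obtain ⟨z, hz⟩ := span_singleton_eq_span_singleton.mp h
    have hz' : (z : K) • (x + c • y) = x + c' • y := Subtype.ext hz
    obtain ⟨hz1, hc⟩ := LinearIndependent.pair_iff.mp hxy (z - 1) (z * c - c') (by
      rw [← sub_eq_zero] at hz'
      linear_combination (norm := module) hz')
    linear_combination hc - c * hz1
  refine (Set.infinite_range_of_injective hinj).mono ?_
  rintro _ ⟨c, rfl⟩
  refine ⟨(span_singleton_le_iff_mem _ _).mpr (x + c • y).2, finrank_span_singleton ?_⟩
  exact_mod_cast hne c

section Compatible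

variable {E : Type*} [NormedAddCommGroup E] [InnerProductSpace ℂ E] {X Z : Submodule ℂ E}

lemma projOn_eq_starProjection (X : Submodule ℂ E) [X.HasOrthogonalProjection] :
    projOn X = X.starProjection :=
  dif_pos ‹_›

lemma compatible_iff_commute [X.HasOrthogonalProjection] [Z.HasOrthogonalProjection] :
    Compatible X Z ↔ Commute X.starProjection Z.starProjection := by
  rw [Compatible, projOn_eq_starProjection, projOn_eq_starProjection]
  rfl

end Compatible

section Adjacency

variable {E : Type*} [NormedAddCommGroup E] [InnerProductSpace ℂ E] [FiniteDimensional ℂ E]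
  {k : ℕ} {L M T W X Y : Submodule ℂ E}

lemma isDim_sup_of_le_orthogonal (hk : 1 ≤ k) (hM : finrank ℂ M = k - 1) (hLM : L ≤ Mᗮ)
    (hL : finrank ℂ L = 1) : IsDim k (M ⊔ L) :=
  ⟨inferInstance, by rw [finrank_sup_of_le_orthogonal hLM]; omega⟩

lemma orthoAdjacent_sup_of_le_orthogonal (hMT : M ≤ T) (hLT : L ≤ Tᗮ) (hL : L ≠ ⊥)
    (hM : finrank ℂ M = k - 1) : OrthoAdjacent k (M ⊔ L) T := by
  refine ⟨⟨fun hT => hL ?_, by rw [sup_inf_eq_of_le_orthogonal hMT hLT, hM]⟩,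
    compatible_iff_commute.mpr (commute_starProjection_sup_of_le_orthogonal hMT hLT)⟩
  rw [eq_bot_iff, ← disjoint_iff.mp (orthogonal_disjoint T)]
  exact le_inf (hT ▸ le_sup_right) hLT

lemma AdjacentSub.inf_eq_of_le (h : AdjacentSub k W T) (hMW : M ≤ W) (hMT : M ≤ T)
    (hM : finrank ℂ M = k - 1) : W ⊓ T = M :=
  (eq_of_le_of_finrank_eq (le_inf hMW hMT) (by rw [hM, h.2])).symm

lemma AdjacentSub.inf_le_or_le_sup (hXY : AdjacentSub k X Y) (hW : finrank ℂ W = k)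
    (hWX : AdjacentSub k W X) (hWY : AdjacentSub k W Y) : X ⊓ Y ≤ W ∨ W ≤ X ⊔ Y := by
  refine or_iff_not_imp_left.mpr fun hMW => ?_
  have hlt : finrank ℂ ↥(W ⊓ (X ⊓ Y)) < k - 1 :=
    hXY.2 ▸ finrank_lt_finrank_of_lt (inf_le_right.lt_of_ne fun h => hMW (h ▸ inf_le_left))
  have hsum := finrank_sup_add_finrank_inf_eq (W ⊓ X) (W ⊓ Y)
  rw [← inf_inf_distrib_left, hWX.2, hWY.2] at hsum
  have hsup : (W ⊓ X) ⊔ (W ⊓ Y) = W :=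
    eq_of_le_of_finrank_le (sup_le inf_le_left inf_le_left) (by omega)
  exact hsup ▸ sup_le_sup inf_le_right inf_le_right

lemma eq_sup_of_orthoAdjacent (hk : 1 ≤ k) (hXY : AdjacentSub k X Y) (hLN : L ≤ (X ⊔ Y)ᗮ)
    (hL' : finrank ℂ ↥(Lᗮ ⊓ (X ⊔ Y)ᗮ) = 1) (hW : IsDim k W) (hWX : OrthoAdjacent k W X)
    (hWY : OrthoAdjacent k W Y) (hWZ : OrthoAdjacent k W (X ⊓ Y ⊔ L)) :
    W = X ⊓ Y ⊔ (Lᗮ ⊓ (X ⊔ Y)ᗮ) := by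
  have hMW : X ⊓ Y ≤ W := by
    rcases hXY.inf_le_or_le_sup hW.2 hWX.1 hWY.1 with hMW | hWN
    · exact hMW
    · have hWZM : W ⊓ (X ⊓ Y ⊔ L) ≤ X ⊓ Y := (inf_le_inf_right _ hWN).trans_eq <| by
        rw [inf_comm, sup_inf_eq_of_le_orthogonal (inf_le_left.trans le_sup_left) hLN]
      rw [← eq_of_le_of_finrank_eq hWZM (by rw [hWZ.1.2, hXY.2])]
      exact inf_le_left
  have hperp : ∀ T, OrthoAdjacent k W T → X ⊓ Y ≤ T → (X ⊓ Y)ᗮ ⊓ W ≤ Tᗮ := fun T hT hMT => by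
    simpa only [hT.1.inf_eq_of_le hMW hMT hXY.2] using
      inf_orthogonal_inf_le_orthogonal_of_commute (compatible_iff_commute.mp hT.2)
  have hle : (X ⊓ Y)ᗮ ⊓ W ≤ Lᗮ ⊓ (X ⊔ Y)ᗮ := by
    refine le_inf ((hperp _ hWZ le_sup_left).trans (orthogonal_le le_sup_right)) ?_
    rw [← inf_orthogonal]
    exact le_inf (hperp X hWX inf_le_left) (hperp Y hWY inf_le_right)
  have hdim : finrank ℂ ↥((X ⊓ Y)ᗮ ⊓ W) = 1 :=
    finrank_add_inf_finrank_orthogonal' hMW (by rw [hXY.2, hW.2]; omega)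
  rw [← eq_of_le_of_finrank_eq hle (hdim.trans hL'.symm),
    sup_orthogonal_inf_of_hasOrthogonalProjection hMW]

lemma isDim_orthoAdjacent_sup_of_le_orthogonal (hk : 1 ≤ k) (hXY : AdjacentSub k X Y)
    (hLN : L ≤ (X ⊔ Y)ᗮ) (hL : finrank ℂ L = 1) :
    IsDim k (X ⊓ Y ⊔ L) ∧ OrthoAdjacent k (X ⊓ Y ⊔ L) X ∧ OrthoAdjacent k (X ⊓ Y ⊔ L) Y := by
  have hLne : L ≠ ⊥ := one_le_finrank_iff.mp hL.ge
  have hLX : L ≤ Xᗮ := hLN.trans (orthogonal_le le_sup_left)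
  exact ⟨isDim_sup_of_le_orthogonal hk hXY.2 (hLX.trans (orthogonal_le inf_le_left)) hL,
    orthoAdjacent_sup_of_le_orthogonal inf_le_left hLX hLne hXY.2,
    orthoAdjacent_sup_of_le_orthogonal inf_le_right (hLN.trans (orthogonal_le le_sup_right)) hLne
      hXY.2⟩

lemma existsUnique_orthoAdjacent_sup (hk : 1 ≤ k) (hXY : AdjacentSub k X Y)
    (hN : finrank ℂ ↥(X ⊔ Y)ᗮ = 2) (hLN : L ≤ (X ⊔ Y)ᗮ) (hL : finrank ℂ L = 1) :
    ∃! Z', IsDim k Z' ∧ OrthoAdjacent k Z' X ∧ OrthoAdjacent k Z' Y ∧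
      OrthoAdjacent k Z' (X ⊓ Y ⊔ L) := by
  have hL' : finrank ℂ ↥(Lᗮ ⊓ (X ⊔ Y)ᗮ) = 1 := finrank_add_inf_finrank_orthogonal' hLN (by omega)
  obtain ⟨hZ', hZ'X, hZ'Y⟩ := isDim_orthoAdjacent_sup_of_le_orthogonal hk hXY inf_le_right hL'
  have hL'M : Lᗮ ⊓ (X ⊔ Y)ᗮ ≤ (X ⊓ Y)ᗮ :=
    inf_le_right.trans (orthogonal_le (inf_le_left.trans le_sup_left))
  have hL'Z : Lᗮ ⊓ (X ⊔ Y)ᗮ ≤ (X ⊓ Y ⊔ L)ᗮ := by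
    rw [← inf_orthogonal (X ⊓ Y) L]
    exact le_inf hL'M inf_le_left
  exact ⟨X ⊓ Y ⊔ (Lᗮ ⊓ (X ⊔ Y)ᗮ), ⟨hZ', hZ'X, hZ'Y, orthoAdjacent_sup_of_le_orthogonal le_sup_left
      hL'Z (one_le_finrank_iff.mp hL'.ge) hXY.2⟩,
    fun W ⟨hW, hWX, hWY, hWZ⟩ => eq_sup_of_orthoAdjacent hk hXY hLN hL' hW hWX hWY hWZ⟩

end Adjacency

theorem infinite_common_neighbours_with_unique_general
    [FiniteDimensional ℂ H] (k : ℕ) (hk : 2 ≤ k)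
    (hk3 : k = Module.finrank ℂ H - 3)
    (X Y : Submodule ℂ H) (hX : IsDim k X) (hY : IsDim k Y)
    (hadj : AdjacentSub k X Y) :
    {Z : Submodule ℂ H | IsDim k Z ∧ OrthoAdjacent k Z X ∧ OrthoAdjacent k Z Y ∧
      (∃! Z' : Submodule ℂ H, IsDim k Z' ∧ OrthoAdjacent k Z' X ∧ OrthoAdjacent k Z' Y ∧
        OrthoAdjacent k Z' Z)}.Infinite := by
  have hN : finrank ℂ ↥(X ⊔ Y)ᗮ = 2 := by
    have := finrank_sup_add_finrank_inf_eq X Y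
    exact finrank_add_finrank_orthogonal' (by rw [hX.2, hY.2, hadj.2] at this; omega)
  have hinj : Set.InjOn (X ⊓ Y ⊔ ·) {L | L ≤ (X ⊔ Y)ᗮ ∧ finrank ℂ L = 1} :=
    (injOn_sup_left_of_le (inf_le_left.trans le_sup_left)).mono fun _ hL => hL.1
  refine ((setOf_le_finrank_eq_one_infinite (by omega)).image hinj).mono ?_
  rintro _ ⟨L, ⟨hLN, hL⟩, rfl⟩
  obtain ⟨hZ, hZX, hZY⟩ := isDim_orthoAdjacent_sup_of_le_orthogonal (by omega) hadj hLN hL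
  exact ⟨hZ, hZX, hZY, existsUnique_orthoAdjacent_sup (by omega) hadj hN hLN hL⟩

/-- Suppose `H` is finite-dimensional, `4 ≤ 2k ≤ dim H` and `k = dim H - 3`. If `X, Y` are
non-compatible adjacent `k`-dimensional subspaces of `H`, then there are infinitely many
`k`-dimensional subspaces `Z` ortho-adjacent to both `X, Y` and such that there is precisely
one `k`-dimensional subspace `Z'` ortho-adjacent to each of `X, Y, Z`. -/
theorem infinite_common_neighbours_with_unique
    [FiniteDimensional ℂ H] (k : ℕ) (hk : 2 ≤ k) (h2k : 2 * k ≤ Module.finrank ℂ H)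
    (hk3 : k = Module.finrank ℂ H - 3)
    (X Y : Submodule ℂ H) (hX : IsDim k X) (hY : IsDim k Y)
    (hadj : AdjacentSub k X Y) (hnc : ¬ Compatible X Y) :
    {Z : Submodule ℂ H | IsDim k Z ∧ OrthoAdjacent k Z X ∧ OrthoAdjacent k Z Y ∧
      (∃! Z' : Submodule ℂ H, IsDim k Z' ∧ OrthoAdjacent k Z' X ∧ OrthoAdjacent k Z' Y ∧
        OrthoAdjacent k Z' Z)}.Infinite :=
  infinite_common_neighbours_with_unique_general k hk hk3 X Y hX hY hadj
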